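/- arXiv:2102.00486 — 2 statements merged into one kernel-verified Lean document; each statement's English description precedes it below -/
import Mathlib

section
/- Let E be a hereditarily unicoherent continuum and E₁, …, E_k be subcontinua of E. If the sets E_i intersect pairwise (E_i ∩ E_j ≠ ∅ for all i, j), then the intersection ⋂_{i=1}^{k} E_i is nonempty, hence it is a subcontinuum of E. -/
open Metric Set Filter Topology

/-- A set homeomorphic to the circle. -/
def IsCircleSet {X : Type*} [TopologicalSpace X] (S : Set X) : Prop :=
  Nonempty (S ≃ₜ AddCircle (1 : ℝ))

/-- The (ambient) space `X` is a dendrite: a nonempty compact connected locally connected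
metric space containing no subset homeomorphic to a circle. -/
structure IsDendrite (X : Type*) [MetricSpace X] : Prop where
  compact : CompactSpace X
  connected : ConnectedSpace X
  locallyConnected : LocallyConnectedSpace X
  noCircle : ∀ S : Set X, ¬ IsCircleSet S

/-- The set of connected components of the subset `F` (as subsets of the ambient space). -/
def componentsIn {X : Type*} [TopologicalSpace X] (F : Set X) : Set (Set X) :=
  {C | ∃ y ∈ F, C = connectedComponentIn F y}

/-- `x` has finite order: `X \ {x}` has finitely many connected components. -/
def HasFiniteOrder {X : Type*} [TopologicalSpace X] (x : X) : Prop :=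
  (componentsIn ({x}ᶜ : Set X)).Finite

/-- `x` is an endpoint of the space: `X \ {x}` has exactly one connected component. -/
def IsEndpoint {X : Type*} [TopologicalSpace X] (x : X) : Prop :=
  ∃! C, C ∈ componentsIn ({x}ᶜ : Set X)

/-- `x` is an endpoint of the subset `S`: `S \ {x}` has exactly one connected component. -/
def IsEndpointOf {X : Type*} [TopologicalSpace X] (S : Set X) (x : X) : Prop :=
  ∃! C, C ∈ componentsIn (S \ {x})

/-- `x` is a cutpoint of the space: `X \ {x}` has at least two connected components. -/
def IsCutpoint {X : Type*} [TopologicalSpace X] (x : X) : Prop :=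
  ∃ C₁ ∈ componentsIn ({x}ᶜ : Set X), ∃ C₂ ∈ componentsIn ({x}ᶜ : Set X), C₁ ≠ C₂

/-- The set of branch points: points of order at least 3. -/
def branchPoints (X : Type*) [TopologicalSpace X] : Set X :=
  {x | ∃ C₁ ∈ componentsIn ({x}ᶜ : Set X), ∃ C₂ ∈ componentsIn ({x}ᶜ : Set X),
       ∃ C₃ ∈ componentsIn ({x}ᶜ : Set X), C₁ ≠ C₂ ∧ C₁ ≠ C₃ ∧ C₂ ≠ C₃}

/-- A subdendrite: a nonempty closed connected subset. -/
def IsSubdendrite {X : Type*} [TopologicalSpace X] (S : Set X) : Prop :=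
  IsClosed S ∧ IsConnected S

/-- The space is completely regular (as a continuum): every nondegenerate subcontinuum
has nonempty interior. -/
def IsCompletelyRegularContinuum (X : Type*) [TopologicalSpace X] : Prop :=
  ∀ S : Set X, IsClosed S → IsConnected S → S.Nontrivial → (interior S).Nonempty

/-- `(x, y)` is a scrambled (Li–Yorke) pair for `f`. -/
def IsScrambledPair {X : Type*} [MetricSpace X] (f : X → X) (x y : X) : Prop :=
  Filter.atTop.liminf (fun n : ℕ => dist (f^[n] x) (f^[n] y)) = 0 ∧
  0 < Filter.atTop.limsup (fun n : ℕ => dist (f^[n] x) (f^[n] y))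

/-- `(x, y)` is an `ε`-scrambled pair for `f`. -/
def IsEpsScrambledPair {X : Type*} [MetricSpace X] (f : X → X) (ε : ℝ) (x y : X) : Prop :=
  Filter.atTop.liminf (fun n : ℕ => dist (f^[n] x) (f^[n] y)) = 0 ∧
  ε < Filter.atTop.limsup (fun n : ℕ => dist (f^[n] x) (f^[n] y))

/-- `f` is generically chaotic: the set of scrambled pairs is residual in `X × X`. -/
def GenericallyChaotic {X : Type*} [MetricSpace X] (f : X → X) : Prop :=
  {p : X × X | IsScrambledPair f p.1 p.2} ∈ residual (X × X)

/-- `f` is generically `ε`-chaotic: the set of `ε`-scrambled pairs is residual in `X × X`. -/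
def GenericallyEpsChaotic {X : Type*} [MetricSpace X] (f : X → X) (ε : ℝ) : Prop :=
  {p : X × X | IsEpsScrambledPair f ε p.1 p.2} ∈ residual (X × X)

/-- Distance between two sets: `inf {d(a,b) : a ∈ A, b ∈ B}`. -/
noncomputable def setDist {X : Type*} [MetricSpace X] (A B : Set X) : ℝ :=
  sInf (Set.image2 dist A B)

/-- Condition (Prox) for a family of subsets. -/
def ProxFamily {X : Type*} [MetricSpace X] (f : X → X) (𝒮 : Set (Set X)) : Prop :=
  ∀ S₁ ∈ 𝒮, ∀ S₂ ∈ 𝒮,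
    Filter.atTop.liminf (fun n : ℕ => setDist ((f^[n]) '' S₁) ((f^[n]) '' S₂)) = 0

/-- Condition (Sens) with constant `η` for a family of subsets. -/
def SensFamily {X : Type*} [MetricSpace X] (f : X → X) (𝒮 : Set (Set X)) (η : ℝ) : Prop :=
  ∀ S ∈ 𝒮, η < Filter.atTop.limsup (fun n : ℕ => Metric.diam ((f^[n]) '' S))

/-- An arc: a set homeomorphic to `[0,1]`. -/
def IsArc {X : Type*} [TopologicalSpace X] (A : Set X) : Prop :=
  Nonempty ((Set.Icc (0:ℝ) 1) ≃ₜ A)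

/-- A free arc: an arc which, with its two endpoints removed, is open in the ambient space. -/
def IsFreeArc {X : Type*} [TopologicalSpace X] (A : Set X) : Prop :=
  ∃ φ : (Set.Icc (0:ℝ) 1) ≃ₜ A,
    IsOpen (A \ {(φ ⟨0, Set.left_mem_Icc.mpr zero_le_one⟩).1,
                 (φ ⟨1, Set.right_mem_Icc.mpr zero_le_one⟩).1})

/-- The family of all open balls of positive radius. -/
def openBallFamily (X : Type*) [MetricSpace X] : Set (Set X) :=
  {B | ∃ x : X, ∃ r : ℝ, 0 < r ∧ B = Metric.ball x r}

/-- The family of all free arcs. -/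
def freeArcFamily (X : Type*) [TopologicalSpace X] : Set (Set X) :=
  {A | IsFreeArc A}

/-- The family of all nondegenerate subdendrites. -/
def subdendriteFamily (X : Type*) [TopologicalSpace X] : Set (Set X) :=
  {S | IsSubdendrite S ∧ S.Nontrivial}

/-- In a uniquely arcwise connected space (such as a dendrite), the arc `[x,y]` coincides with
the intersection of all connected sets containing both `x` and `y`. -/
def dendArc {X : Type*} [TopologicalSpace X] (x y : X) : Set X :=
  ⋂₀ {C : Set X | IsPreconnected C ∧ x ∈ C ∧ y ∈ C}

/-- `D^a(x) = {y : x ∈ [a,y]}`. -/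
def Dup {X : Type*} [TopologicalSpace X] (a x : X) : Set X :=
  {y | x ∈ dendArc a y}

/-- `D_{[a,b]}`: the closure of `D \ (D^b(a) ∪ D^a(b))`. -/
def Dab {X : Type*} [TopologicalSpace X] (a b : X) : Set X :=
  closure (Set.univ \ (Dup b a ∪ Dup a b))

/-- `x` admires `a`: `f(x) ∈ D_{[a,x)}`, i.e. `f(x) ∈ D_{[a,x]}` and `f(x) ≠ x`. -/
def Admires {X : Type*} [TopologicalSpace X] (f : X → X) (a x : X) : Prop :=
  f x ∈ Dab a x ∧ f x ≠ x

/-- `x` evades `a`: `f(x) ∈ D^a(x) \ {x}`. -/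
def Evades {X : Type*} [TopologicalSpace X] (f : X → X) (a x : X) : Prop :=
  f x ∈ Dup a x ∧ f x ≠ x

/-- The orbit of a set under `f`. -/
def orbitSet {X : Type*} (f : X → X) (A : Set X) : Set X :=
  ⋃ n : ℕ, (f^[n]) '' A

/-- `f` is exact (locally eventually onto). -/
def IsExactMap {X : Type*} [TopologicalSpace X] (f : X → X) : Prop :=
  Continuous f ∧ ∀ U : Set X, IsOpen U → U.Nonempty → ∃ n : ℕ, 0 < n ∧ (f^[n]) '' U = Set.univ

/-- The Riemann (Thomae) function: `0` at irrationals, `1/q` at a rational with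
reduced denominator `q`. -/
noncomputable def riemannFn (x : ℝ) : ℝ :=
  open scoped Classical in
  if h : ∃ q : ℚ, (q : ℝ) = x then 1 / ((h.choose.den : ℕ) : ℝ) else 0

/-- The Riemann dendrite: the subgraph of the Riemann function over `[0,1]`. -/
def RiemannDendrite : Set (ℝ × ℝ) :=
  {p | p.1 ∈ Set.Icc (0:ℝ) 1 ∧ p.2 ∈ Set.Icc (0:ℝ) (riemannFn p.1)}

/-- `a` is a weakly repelling fixed point of `f` for the component `B`. -/
def WeaklyRepellingFor {X : Type*} [MetricSpace X] (f : X → X) (a : X) (B : Set X) : Prop :=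
  (∀ ε > (0:ℝ), ∃ x ∈ B, dist x a < ε ∧ IsCutpoint x ∧ f x = x) ∨
  (∀ ε > (0:ℝ), ∃ x ∈ B, dist x a < ε ∧ IsCutpoint x ∧ Evades f a x)

/-- Helly-type lemma: three pairwise intersecting subcontinua of a hereditarily
unicoherent space have a common point. -/
lemma three_intersecting_subcontinua {E : Type*} [TopologicalSpace E]
    (hHU : ∀ A B : Set E, IsClosed A → IsConnected A → IsClosed B → IsConnected B →
        IsPreconnected (A ∩ B))
    {A B C : Set E} (hAc : IsClosed A) (hA : IsConnected A)
    (hBc : IsClosed B) (hB : IsConnected B) (hCc : IsClosed C) (hC : IsConnected C)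
    (hAB : (A ∩ B).Nonempty) (hAC : (A ∩ C).Nonempty) (hBC : (B ∩ C).Nonempty) :
    (A ∩ B ∩ C).Nonempty := by
  by_contra h
  rw [Set.not_nonempty_iff_eq_empty] at h
  have hempty : ∀ x, x ∈ A → x ∈ B → x ∈ C → False := by
    intro x hxA hxB hxC
    have : x ∈ A ∩ B ∩ C := ⟨⟨hxA, hxB⟩, hxC⟩
    rw [h] at this; exact this
  have hBCconn : IsConnected (B ∪ C) := IsConnected.union hBC hB hC
  have hP := hHU A (B ∪ C) hAc hA (hBc.union hCc) hBCconn
  have hU : IsOpen ((A ∩ C)ᶜ) := (hAc.inter hCc).isOpen_compl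
  have hV : IsOpen ((A ∩ B)ᶜ) := (hAc.inter hBc).isOpen_compl
  have hsub : A ∩ (B ∪ C) ⊆ (A ∩ C)ᶜ ∪ (A ∩ B)ᶜ := by
    rintro x ⟨hxA, _⟩
    by_contra hx
    simp only [Set.mem_union, Set.mem_compl_iff, not_or, not_not] at hx
    exact hempty x hxA hx.2.2 hx.1.2
  have h1 : (A ∩ (B ∪ C) ∩ (A ∩ C)ᶜ).Nonempty := by
    obtain ⟨x, hxA, hxB⟩ := hAB
    exact ⟨x, ⟨hxA, Or.inl hxB⟩, fun hx => hempty x hxA hxB hx.2⟩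
  have h2 : (A ∩ (B ∪ C) ∩ (A ∩ B)ᶜ).Nonempty := by
    obtain ⟨x, hxA, hxC⟩ := hAC
    exact ⟨x, ⟨hxA, Or.inr hxC⟩, fun hx => hempty x hxA hx.2 hxC⟩
  obtain ⟨x, ⟨hxA, hxBC⟩, hx1, hx2⟩ := hP _ _ hU hV hsub h1 h2
  cases hxBC with
  | inl hxB => exact hx2 ⟨hxA, hxB⟩
  | inr hxC => exact hx1 ⟨hxA, hxC⟩

lemma finset_intersecting_subcontinua {E : Type*} [TopologicalSpace E]
    (hHU : ∀ A B : Set E, IsClosed A → IsConnected A → IsClosed B → IsConnected B →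
        IsPreconnected (A ∩ B))
    {ι : Type*} [DecidableEq ι] (Es : ι → Set E)
    (hE : ∀ i, IsClosed (Es i) ∧ IsConnected (Es i))
    (hpair : ∀ i j, (Es i ∩ Es j).Nonempty) :
    ∀ S : Finset ι, S.Nonempty →
      IsClosed (⋂ i ∈ S, Es i) ∧ IsConnected (⋂ i ∈ S, Es i) ∧
      ∀ j, ((⋂ i ∈ S, Es i) ∩ Es j).Nonempty := by
  intro S
  induction S using Finset.induction_on with
  | empty => intro h; exact absurd h (by simp)
  | @insert a S ha IH =>
    intro _
    rcases S.eq_empty_or_nonempty with rfl | hS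
    · simpa using ⟨(hE a).1, (hE a).2, hpair a⟩
    · obtain ⟨hFc, hFconn, hFj⟩ := IH hS
      have heq : (⋂ i ∈ insert a S, Es i) = Es a ∩ ⋂ i ∈ S, Es i := by
        simp [Set.biInter_insert]
      rw [heq]
      have hne : (Es a ∩ ⋂ i ∈ S, Es i).Nonempty := by
        rw [Set.inter_comm]; exact hFj a
      refine ⟨(hE a).1.inter hFc,
        ⟨hne, hHU (Es a) _ (hE a).1 (hE a).2 hFc hFconn⟩, fun j => ?_⟩
      have h3 := three_intersecting_subcontinua hHU hFc hFconn (hE a).1 (hE a).2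
        (hE j).1 (hE j).2 (hFj a) (hFj j) (hpair a j)
      obtain ⟨x, ⟨⟨hxF, hxa⟩, hxj⟩⟩ := h3
      exact ⟨x, ⟨hxa, hxF⟩, hxj⟩

/-- In a hereditarily unicoherent continuum, finitely many pairwise intersecting subcontinua
have nonempty intersection, and this intersection is a subcontinuum. -/
theorem pairwise_intersecting_subcontinua
    (E : Type*) [MetricSpace E] [CompactSpace E] [ConnectedSpace E]
    (hHU : ∀ A B : Set E, IsClosed A → IsConnected A → IsClosed B → IsConnected B →
        IsPreconnected (A ∩ B))
    {k : ℕ} (Es : Fin k → Set E)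
    (hE : ∀ i, IsClosed (Es i) ∧ IsConnected (Es i))
    (hpair : ∀ i j, (Es i ∩ Es j).Nonempty) :
    (⋂ i, Es i).Nonempty ∧ IsClosed (⋂ i, Es i) ∧ IsPreconnected (⋂ i, Es i) := by
  rcases Nat.eq_zero_or_pos k with rfl | hk
  · have : (⋂ i, Es i) = Set.univ := by simp [Set.iInter_of_empty]
    rw [this]
    exact ⟨Set.univ_nonempty, isClosed_univ, isPreconnected_univ⟩
  · have huniv : (Finset.univ : Finset (Fin k)).Nonempty := by
      simpa [Finset.univ_nonempty_iff] using Fin.pos_iff_nonempty.mp hk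
    obtain ⟨hFc, hFconn, hFj⟩ :=
      finset_intersecting_subcontinua hHU Es hE hpair Finset.univ huniv
    have heq : (⋂ i ∈ (Finset.univ : Finset (Fin k)), Es i) = ⋂ i, Es i := by simp
    rw [heq] at hFc hFconn
    exact ⟨hFconn.nonempty, hFc, hFconn.isPreconnected⟩
end

section
/- Let D be a dendrite whose metric d satisfies ℋ¹_d(D) < ∞ (D has finite length), let f : D → D be continuous, and let E ⊆ D be a connected set with limsup_{n→∞} diam fⁿ(E) > 0. Then: (1) there exists a least nonnegative integer n₀ such that f^{n₀}(E) ∩ f^{n₀+k}(E) ≠ ∅ for some positive integer k; (2) for any such positive integer k, the sets K_i = ⋃_{j=0}^{∞} f^{n₀+i+jk}(E) for i ∈ {0,1,…,k−1} are connected subsets of D with f(K_i) = K_{i+1} for i ≤ k−2 and f(K_{k−1}) ⊆ K₀; (3) the orbit Orb_f(f^{n₀}(E)) = ⋃_{n≥0} fⁿ(f^{n₀}(E)) has connected components L₀ (containing K₀ and f^{n₀}(E)), L₁, …, L_{r−1}, where r divides k, f(L_j) = L_{j+1} for j ≤ r−2, f(L_{r−1}) ⊆ L₀, and L_j = ⋃_{ℓ=0}^{k/r−1}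 K_{j+ℓr} for every j; (4) Orb_f(E) = E ⊔ f(E) ⊔ … ⊔ f^{n₀−1}(E) ⊔ L₀ ⊔ L₁ ⊔ … ⊔ L_{r−1}, a disjoint union. -/
open Metric Set Filter Topology

/-!
The finite length of `D` forces some iterate `f^[n] '' E` to meet a later one. Otherwise the
iterates are pairwise disjoint connected sets, infinitely many of diameter `> δ`; infinitely many
of those start near a common point `y`, so each covers a fixed interval of length `δ / 2` under
`dist y`. Counting, level by level, how many members of a fine cover of `D` lie over that interval
gives `N * δ / 2 ≤ ℋ¹(D)` for every `N`.

Once `A = f^[n₀] '' E` meets `f^[k] '' A`, the component of the orbit of `A` containing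
`f^[n] '' A` is the `n`-th iterate of the component of `A` under the map that `f` induces on
components. That component is periodic of some period `r ∣ k`, so the component of `f^[n] '' A`
depends only on `n` modulo `r`, and all the claims reduce to arithmetic of indices.
-/

open MeasureTheory Function
open scoped ENNReal

section FiniteLength

variable {X : Type*} [MetricSpace X] [MeasurableSpace X] [BorelSpace X]

theorem exists_cover_tsum_ediam_lt {S : Set X} {c : ℝ≥0∞} (hc : μH[1] S < c) {r : ℝ≥0∞}
    (hr : 0 < r) :
    ∃ U : ℕ → Set X, S ⊆ ⋃ l, U l ∧ (∀ l, ediam (U l) ≤ r) ∧ ∑' l, ediam (U l) < c := by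
  rw [Measure.hausdorffMeasure_apply] at hc
  have hlt := (le_iSup₂ (f := fun (r : ℝ≥0∞) (_ : 0 < r) =>
    ⨅ (U : ℕ → Set X) (_ : S ⊆ ⋃ l, U l) (_ : ∀ l, ediam (U l) ≤ r),
      ∑' l, ⨆ _ : (U l).Nonempty, ediam (U l) ^ (1 : ℝ)) r hr).trans_lt hc
  simp only [iInf_lt_iff] at hlt
  obtain ⟨U, hSU, hUr, hUc⟩ := hlt
  refine ⟨U, hSU, hUr, lt_of_eq_of_lt (tsum_congr fun l => ?_) hUc⟩
  rcases (U l).eq_empty_or_nonempty with hU | hU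
  · simp [hU]
  · rw [ciSup_pos hU, ENNReal.rpow_one]

/-- An Eilenberg-type inequality: a cover of `S` by sets of diameter `≤ ε` has `N` distinct
members over each level `s ∈ A`, and their images under `g` have total length at most the sum of
their diameters. -/
theorem natCast_mul_volume_le_hausdorffMeasure_of_separated {g : X → ℝ} (hg : LipschitzWith 1 g)
    {S : Set X} {A : Set ℝ} {N : ℕ} {p : Fin N → ℝ → X} {ε : ℝ} (hε : 0 < ε)
    (hpS : ∀ s ∈ A, ∀ i, p i s ∈ S) (hpg : ∀ s ∈ A, ∀ i, g (p i s) = s)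
    (hsep : ∀ s ∈ A, ∀ i j, i ≠ j → ε < dist (p i s) (p j s)) :
    N * volume A ≤ μH[1] S := by
  refine le_of_forall_gt fun c hc => ?_
  obtain ⟨U, hSU, hUε, hUc⟩ := exists_cover_tsum_ediam_lt hc (ENNReal.ofReal_pos.2 hε)
  set J : ℕ → Set ℝ := fun l => closure (g '' U l)
  set Φ : ℝ → ℝ≥0∞ := fun s => ∑' l, (J l).indicator 1 s
  have hJ : ∀ l, MeasurableSet (J l) := fun l => isClosed_closure.measurableSet
  have hΦ : Measurable Φ := Measurable.tsum fun l => measurable_one.indicator (hJ l)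
  have hAΦ : A ⊆ {s | (N : ℝ≥0∞) ≤ Φ s} := by
    intro s hs
    choose l hl using fun i => mem_iUnion.1 (hSU (hpS s hs i))
    have hl_inj : Injective l := by
      intro i j hij
      by_contra hne
      have hdist : edist (p i s) (p j s) ≤ ENNReal.ofReal ε :=
        (Metric.edist_le_ediam_of_mem (hl i) (hij ▸ hl j)).trans (hUε _)
      rw [edist_dist, ENNReal.ofReal_le_ofReal_iff hε.le] at hdist
      exact (hsep s hs i j hne).not_ge hdist
    have hsJ : ∀ i, s ∈ J (l i) := fun i =>
      subset_closure ⟨p i s, hl i, hpg s hs i⟩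
    calc (N : ℝ≥0∞) = ∑ i, (J (l i)).indicator 1 s := by simp [indicator_of_mem (hsJ _)]
      _ = ∑ m ∈ Finset.univ.image l, (J m).indicator 1 s :=
          (Finset.sum_image (f := fun m => (J m).indicator 1 s) fun i _ j _ h => hl_inj h).symm
      _ ≤ Φ s := ENNReal.sum_le_tsum _
  calc (N : ℝ≥0∞) * volume A ≤ N * volume {s | (N : ℝ≥0∞) ≤ Φ s} := by gcongr
    _ ≤ ∫⁻ s, Φ s := mul_meas_ge_le_lintegral₀ hΦ.aemeasurable _
    _ = ∑' l, volume (J l) := by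
        rw [lintegral_tsum fun l => (measurable_one.indicator (hJ l)).aemeasurable]
        exact tsum_congr fun l => lintegral_indicator_one (hJ l)
    _ ≤ ∑' l, ediam (U l) := ENNReal.tsum_le_tsum fun l => by
        grw [Real.volume_le_diam, Metric.ediam_closure, hg.ediam_image_le]
        simp
    _ < c := hUc

theorem natCast_mul_volume_le_hausdorffMeasure_iUnion {g : X → ℝ} (hg : LipschitzWith 1 g)
    {N : ℕ} {T : Fin N → Set X} (hT : Pairwise (Disjoint on T)) {A : Set ℝ}
    (hA : ∀ i, A ⊆ g '' T i) :
    N * volume A ≤ μH[1] (⋃ i, T i) := by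
  rcases N.eq_zero_or_pos with rfl | hN
  · simp
  rcases A.eq_empty_or_nonempty with rfl | ⟨s₀, hs₀⟩
  · simp
  have : Nonempty X := ⟨(hA ⟨0, hN⟩ hs₀).choose⟩
  choose! p hpT hpg using fun i s (hs : s ∈ A) => hA i hs
  set A' : ℕ → Set ℝ := fun n =>
    {s ∈ A | ∀ i j, i ≠ j → 1 / ((n : ℝ) + 1) < dist (p i s) (p j s)}
  have hA'_mono : Monotone A' := fun m n hmn s hs =>
    ⟨hs.1, fun i j hij => lt_of_le_of_lt (by gcongr) (hs.2 i j hij)⟩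
  have hA'_union : ⋃ n, A' n = A := by
    refine Subset.antisymm (iUnion_subset fun n => sep_subset _ _) fun s hs => ?_
    have hpos : ∀ i j, i ≠ j → 0 < dist (p i s) (p j s) := fun i j hij =>
      dist_pos.2 fun h => (hT hij).ne_of_mem (hpT i s hs) (h ▸ hpT j s hs) rfl
    have hev : ∀ᶠ n : ℕ in atTop, ∀ i j, i ≠ j → 1 / ((n : ℝ) + 1) < dist (p i s) (p j s) := by
      simp only [eventually_all]
      exact fun i j hij =>
        tendsto_one_div_add_atTop_nhds_zero_nat.eventually (gt_mem_nhds (hpos i j hij))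
    obtain ⟨n, hn⟩ := hev.exists
    exact mem_iUnion.2 ⟨n, hs, hn⟩
  rw [← hA'_union, hA'_mono.measure_iUnion, ENNReal.mul_iSup]
  refine iSup_le fun n => natCast_mul_volume_le_hausdorffMeasure_of_separated hg
    (ε := 1 / ((n : ℝ) + 1)) (by positivity) (fun s hs i => mem_iUnion_of_mem i (hpT i s hs.1))
    (fun s hs i => hpg i s hs.1) fun s hs => hs.2

/-- Infinitely many of these sets would start in one ball of radius `δ / 4`, and then each of them
covers `[δ / 4, 3δ / 4]` under the distance to its centre. -/
theorem finite_setOf_lt_diam_of_pairwise_disjoint [CompactSpace X]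
    (hlen : μH[1] (univ : Set X) ≠ ⊤) {ι : Type*} {S : ι → Set X} (hS : ∀ i, IsPreconnected (S i))
    (hdisj : Pairwise (Disjoint on S)) {δ : ℝ} (hδ : 0 < δ) :
    {i | δ < diam (S i)}.Finite := by
  by_contra hinf
  have hfar : ∀ i ∈ {i | δ < diam (S i)}, ∃ a ∈ S i, ∃ b ∈ S i, δ < dist a b := by
    intro i hi
    by_contra! h
    exact (diam_le_of_forall_dist_le hδ.le h).not_gt hi
  have : Nonempty X := ⟨(hfar _ (Set.Infinite.nonempty hinf).some_mem).choose⟩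
  choose! a ha b hb hab using hfar
  obtain ⟨t, -, ht, hcover⟩ :=
    finite_cover_balls_of_compact (isCompact_univ (X := X)) (e := δ / 4) (by positivity)
  obtain ⟨y, -, hy⟩ : ∃ y ∈ t, {i | δ < diam (S i) ∧ a i ∈ ball y (δ / 4)}.Infinite := by
    by_contra! h
    refine hinf ((ht.biUnion h).subset fun i hi => ?_)
    obtain ⟨y, hyt, hay⟩ := mem_iUnion₂.1 (hcover (mem_univ (a i)))
    exact mem_iUnion₂.2 ⟨y, hyt, hi, hay⟩
  have hIcc : ∀ i ∈ {i | δ < diam (S i) ∧ a i ∈ ball y (δ / 4)},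
      Icc (δ / 4) (3 * δ / 4) ⊆ dist y '' S i := by
    rintro i ⟨hi, hai⟩
    rw [mem_ball'] at hai
    have hyb : 3 * δ / 4 ≤ dist y (b i) := by
      linarith [dist_triangle (a i) y (b i), dist_comm y (a i), hab i hi]
    exact (Icc_subset_Icc hai.le hyb).trans <| (hS i).intermediate_value (ha i hi) (hb i hi)
      (LipschitzWith.dist_right y).continuous.continuousOn
  obtain ⟨N, hN⟩ := ENNReal.exists_nat_mul_gt (a := ENNReal.ofReal (δ / 2))
    (by simp [hδ]) hlen
  let e : Fin N → ι := fun n => hy.natEmbedding _ n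
  have he : Injective e := fun m n h =>
    Fin.val_injective ((hy.natEmbedding _).injective (Subtype.val_injective h))
  have := natCast_mul_volume_le_hausdorffMeasure_iUnion (LipschitzWith.dist_right y)
    (hdisj.comp_of_injective he) fun n => hIcc _ (hy.natEmbedding _ n).2
  rw [Real.volume_Icc] at this
  refine (this.trans (measure_mono (subset_univ _))).not_gt (hN.trans_le (le_of_eq ?_))
  congr 2
  ring

theorem exists_image_iterate_inter_nonempty [CompactSpace X] (hlen : μH[1] (univ : Set X) ≠ ⊤)
    {f : X → X} (hf : Continuous f) {E : Set X} (hE : IsPreconnected E)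
    (hdiam : 0 < limsup (fun n => diam (f^[n] '' E)) atTop) :
    ∃ n k, 0 < k ∧ (f^[n] '' E ∩ f^[n + k] '' E).Nonempty := by
  by_contra! h
  have hdisj : Pairwise (Disjoint on fun n => f^[n] '' E) := by
    refine (pairwise_disjoint_on _).2 fun m n hmn => disjoint_iff_inter_eq_empty.2 ?_
    simpa [Nat.add_sub_cancel' hmn.le] using h m (n - m) (Nat.sub_pos_of_lt hmn)
  refine hdiam.not_ge (le_of_forall_pos_le_add fun δ hδ => ?_)
  have hfin := finite_setOf_lt_diam_of_pairwise_disjoint hlen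
    (fun n => hE.image _ (hf.iterate n).continuousOn) hdisj hδ
  refine limsup_le_of_le (isCoboundedUnder_le_of_le atTop fun n => diam_nonneg) ?_
  rw [← Nat.cofinite_eq_atTop, eventually_cofinite]
  simpa using hfin

end FiniteLength

section OrbitComponents

variable {X : Type*} {f : X → X} {A : Set X}

theorem image_iterate_add (f : X → X) (A : Set X) (m n : ℕ) :
    f^[m + n] '' A = f^[m] '' (f^[n] '' A) := by
  rw [iterate_add, image_comp]

theorem image_iterate_subset_orbitSet (n : ℕ) : f^[n] '' A ⊆ orbitSet f A :=
  subset_iUnion (fun n => f^[n] '' A) n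

theorem mapsTo_orbitSet : MapsTo f (orbitSet f A) (orbitSet f A) := by
  intro x hx
  obtain ⟨n, hn⟩ := mem_iUnion.1 hx
  refine image_iterate_subset_orbitSet (n + 1) ?_
  rw [iterate_succ', image_comp]
  exact mem_image_of_mem f hn

theorem orbitSet_eq_union (f : X → X) (A : Set X) (n : ℕ) :
    orbitSet f A = (⋃ m ∈ Finset.range n, f^[m] '' A) ∪ orbitSet f (f^[n] '' A) := by
  refine Subset.antisymm (iUnion_subset fun m => ?_) (union_subset ?_ ?_)
  · rcases lt_or_ge m n with hmn | hnm
    · exact subset_union_of_subset_left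
        (subset_iUnion₂ (s := fun m (_ : m ∈ Finset.range n) => f^[m] '' A) m
          (Finset.mem_range.2 hmn)) _
    · rw [← Nat.sub_add_cancel hnm, image_iterate_add]
      exact subset_union_of_subset_right (image_iterate_subset_orbitSet _) _
  · exact iUnion₂_subset fun m _ => image_iterate_subset_orbitSet m
  · exact iUnion_subset fun m => by
      rw [← image_iterate_add]
      exact image_iterate_subset_orbitSet _

theorem disjoint_image_iterate_of_not_exists {m : ℕ}
    (h : ¬ ∃ k, 0 < k ∧ (f^[m] '' A ∩ f^[m + k] '' A).Nonempty) {n : ℕ} (hmn : m < n) :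
    Disjoint (f^[m] '' A) (f^[n] '' A) :=
  disjoint_iff_inter_eq_empty.2 <| not_nonempty_iff_eq_empty.1 fun hne =>
    h ⟨n - m, Nat.sub_pos_of_lt hmn, by rwa [Nat.add_sub_cancel' hmn.le]⟩

theorem disjoint_orbitSet_of_not_exists {m : ℕ}
    (h : ¬ ∃ k, 0 < k ∧ (f^[m] '' A ∩ f^[m + k] '' A).Nonempty) {n : ℕ} (hmn : m < n) :
    Disjoint (f^[m] '' A) (orbitSet f (f^[n] '' A)) :=
  disjoint_iUnion_right.2 fun t => by
    rw [← image_iterate_add]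
    exact disjoint_image_iterate_of_not_exists h (hmn.trans_le (Nat.le_add_left n t))

theorem image_iUnion_image_iterate (k i : ℕ) :
    f '' ⋃ j, f^[i + j * k] '' A = ⋃ j, f^[i + 1 + j * k] '' A := by
  simp only [image_iUnion, ← image_comp, ← iterate_succ']
  exact iUnion_congr fun j => by rw [Nat.add_right_comm]

theorem image_iUnion_image_iterate_pred_subset {k : ℕ} (hk : 0 < k) :
    f '' ⋃ j, f^[k - 1 + j * k] '' A ⊆ ⋃ j, f^[j * k] '' A := by
  rw [image_iUnion_image_iterate, Nat.sub_add_cancel hk]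
  exact iUnion_subset fun j => by
    rw [add_comm, ← Nat.succ_mul]
    exact subset_iUnion (fun j => f^[j * k] '' A) (j + 1)

variable [TopologicalSpace X]

theorem isConnected_iUnion_image_iterate (hf : Continuous f) (hA : IsConnected A) {k : ℕ}
    (hAk : (A ∩ f^[k] '' A).Nonempty) (i : ℕ) : IsConnected (⋃ j, f^[i + j * k] '' A) := by
  refine IsConnected.iUnion_of_chain (fun j => hA.image _ (hf.iterate _).continuousOn)
    fun j => ((hAk.image (f^[i + j * k])).mono (image_inter_subset _ _ _)).mono ?_
  rw [Order.succ_eq_add_one, ← image_iterate_add, add_mul, one_mul, add_assoc]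

/-- For connected `A`, the component of `orbitSet f A` containing `f^[n] '' A`. -/
def orbitComponent (f : X → X) (A : Set X) (n : ℕ) : Set X :=
  ⋃ x ∈ f^[n] '' A, connectedComponentIn (orbitSet f A) x

/-- The self-map of the components of `F` induced by `f` when `f` maps `F` into itself. -/
def componentMap (f : X → X) (F C : Set X) : Set X :=
  ⋃ x ∈ C, connectedComponentIn F (f x)

theorem image_iterate_subset_orbitComponent (n : ℕ) : f^[n] '' A ⊆ orbitComponent f A n :=
  fun _ hx => mem_biUnion hx (mem_connectedComponentIn (image_iterate_subset_orbitSet n hx))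

theorem orbitComponent_subset_orbitSet (n : ℕ) : orbitComponent f A n ⊆ orbitSet f A :=
  iUnion₂_subset fun _ _ => connectedComponentIn_subset _ _

theorem image_orbitComponent_subset (hf : Continuous f) (n : ℕ) :
    f '' orbitComponent f A n ⊆ orbitComponent f A (n + 1) := by
  rintro _ ⟨x, hx, rfl⟩
  obtain ⟨y, hy, hxy⟩ := mem_iUnion₂.1 hx
  have hfy : f y ∈ f^[n + 1] '' A := by
    rw [iterate_succ', image_comp]
    exact mem_image_of_mem f hy
  have hsub : f '' connectedComponentIn (orbitSet f A) y ⊆ orbitSet f A :=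
    image_subset_iff.2 ((connectedComponentIn_subset _ _).trans fun z hz => mapsTo_orbitSet hz)
  exact mem_biUnion hfy <| (isPreconnected_connectedComponentIn.image f hf.continuousOn
    |>.subset_connectedComponentIn (mem_image_of_mem f (mem_connectedComponentIn
      (image_iterate_subset_orbitSet n hy))) hsub) (mem_image_of_mem f hxy)

variable (hf : Continuous f)
include hf

theorem orbitComponent_eq (hA : IsPreconnected A) {n : ℕ} {x : X} (hx : x ∈ f^[n] '' A) :
    orbitComponent f A n = connectedComponentIn (orbitSet f A) x := by
  have hsub : f^[n] '' A ⊆ connectedComponentIn (orbitSet f A) x :=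
    (hA.image _ (hf.iterate n).continuousOn).subset_connectedComponentIn hx
      (image_iterate_subset_orbitSet n)
  exact Subset.antisymm (iUnion₂_subset fun y hy => (connectedComponentIn_eq (hsub hy)).ge)
    (subset_biUnion_of_mem hx)

theorem orbitComponent_eq_of_mem (hA : IsPreconnected A) {n : ℕ} {x : X}
    (hx : x ∈ orbitComponent f A n) :
    orbitComponent f A n = connectedComponentIn (orbitSet f A) x := by
  obtain ⟨y, hy, hxy⟩ := mem_iUnion₂.1 hx
  rw [orbitComponent_eq hf hA hy, connectedComponentIn_eq hxy]

theorem componentMap_orbitComponent (hA : IsConnected A) (n : ℕ) :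
    componentMap f (orbitSet f A) (orbitComponent f A n) = orbitComponent f A (n + 1) := by
  have hne : (orbitComponent f A n).Nonempty :=
    (hA.nonempty.image _).mono (image_iterate_subset_orbitComponent n)
  calc componentMap f (orbitSet f A) (orbitComponent f A n)
      = ⋃ x ∈ orbitComponent f A n, orbitComponent f A (n + 1) :=
        iUnion₂_congr fun x hx => (orbitComponent_eq_of_mem hf hA.isPreconnected
          (image_orbitComponent_subset hf n (mem_image_of_mem f hx))).symm
    _ = orbitComponent f A (n + 1) := biUnion_const hne _

theorem orbitComponent_eq_iterate (hA : IsConnected A) (n : ℕ) :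
    orbitComponent f A n = (componentMap f (orbitSet f A))^[n] (orbitComponent f A 0) := by
  induction n with
  | zero => rfl
  | succ n ih => rw [iterate_succ_apply', ← ih, componentMap_orbitComponent hf hA]

end OrbitComponents

section PeriodicOrbit

variable {X : Type*} [TopologicalSpace X] {f : X → X} {A : Set X}

/-- The number of components of `orbitSet f A` once `A` meets one of its iterates. -/
noncomputable def orbitComponentPeriod (f : X → X) (A : Set X) : ℕ :=
  minimalPeriod (componentMap f (orbitSet f A)) (orbitComponent f A 0)

variable (hf : Continuous f) (hA : IsConnected A) {k : ℕ} (hk : 0 < k)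
  (hAk : (A ∩ f^[k] '' A).Nonempty)
include hf hA hAk

omit hk in
theorem isPeriodicPt_orbitComponent_zero :
    IsPeriodicPt (componentMap f (orbitSet f A)) k (orbitComponent f A 0) := by
  obtain ⟨x, hx₀, hxk⟩ := hAk
  rw [IsPeriodicPt, IsFixedPt, ← orbitComponent_eq_iterate hf hA,
    orbitComponent_eq hf hA.isPreconnected hxk,
    orbitComponent_eq hf hA.isPreconnected (n := 0) (by simpa using hx₀)]

omit hk in
theorem orbitComponentPeriod_dvd : orbitComponentPeriod f A ∣ k :=
  (isPeriodicPt_orbitComponent_zero hf hA hAk).minimalPeriod_dvd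

include hk

theorem orbitComponentPeriod_pos : 0 < orbitComponentPeriod f A :=
  (isPeriodicPt_orbitComponent_zero hf hA hAk).minimalPeriod_pos hk

theorem orbitComponent_eq_iff_modEq {m n : ℕ} :
    orbitComponent f A m = orbitComponent f A n ↔ m ≡ n [MOD orbitComponentPeriod f A] := by
  have hr := orbitComponentPeriod_pos hf hA hk hAk
  rw [orbitComponent_eq_iterate hf hA, orbitComponent_eq_iterate hf hA n,
    ← iterate_mod_minimalPeriod_eq, ← iterate_mod_minimalPeriod_eq (n := n),
    iterate_eq_iterate_iff_of_lt_minimalPeriod (Nat.mod_lt _ hr) (Nat.mod_lt _ hr)]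
  rfl

theorem orbitComponent_eq_iUnion (n : ℕ) :
    orbitComponent f A n = ⋃ (m) (_ : m ≡ n [MOD orbitComponentPeriod f A]), f^[m] '' A := by
  refine Subset.antisymm (fun x hx => ?_) (iUnion₂_subset fun m hm => ?_)
  · obtain ⟨m, hm⟩ := mem_iUnion.1 (orbitComponent_subset_orbitSet n hx)
    refine mem_iUnion₂.2 ⟨m, (orbitComponent_eq_iff_modEq hf hA hk hAk).1 ?_, hm⟩
    rw [orbitComponent_eq_of_mem hf hA.isPreconnected hx,
      orbitComponent_eq hf hA.isPreconnected hm]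
  · rw [← (orbitComponent_eq_iff_modEq hf hA hk hAk).2 hm]
    exact image_iterate_subset_orbitComponent m

theorem image_iterate_subset_orbitComponent_of_modEq {m n : ℕ}
    (h : m ≡ n [MOD orbitComponentPeriod f A]) : f^[m] '' A ⊆ orbitComponent f A n :=
  (orbitComponent_eq_iff_modEq hf hA hk hAk).2 h ▸ image_iterate_subset_orbitComponent m

theorem orbitComponent_inj_of_lt {j j' : ℕ} (hj : j < orbitComponentPeriod f A)
    (hj' : j' < orbitComponentPeriod f A) (h : orbitComponent f A j = orbitComponent f A j') :
    j = j' :=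
  ((orbitComponent_eq_iff_modEq hf hA hk hAk).1 h).eq_of_lt_of_lt hj hj'

theorem disjoint_orbitComponent {j j' : ℕ} (hj : j < orbitComponentPeriod f A)
    (hj' : j' < orbitComponentPeriod f A) (hne : j ≠ j') :
    Disjoint (orbitComponent f A j) (orbitComponent f A j') :=
  disjoint_left.2 fun _ hx hx' => hne <| orbitComponent_inj_of_lt hf hA hk hAk hj hj' <|
    (orbitComponent_eq_of_mem hf hA.isPreconnected hx).trans
      (orbitComponent_eq_of_mem hf hA.isPreconnected hx').symm

theorem orbitComponent_mod (n : ℕ) :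
    orbitComponent f A (n % orbitComponentPeriod f A) = orbitComponent f A n :=
  (orbitComponent_eq_iff_modEq hf hA hk hAk).2 (Nat.mod_modEq n _)

theorem componentsIn_orbitSet :
    componentsIn (orbitSet f A) =
      {C | ∃ j < orbitComponentPeriod f A, C = orbitComponent f A j} := by
  ext C
  constructor
  · rintro ⟨y, hy, rfl⟩
    obtain ⟨m, hm⟩ := mem_iUnion.1 hy
    refine ⟨m % orbitComponentPeriod f A, Nat.mod_lt _ (orbitComponentPeriod_pos hf hA hk hAk), ?_⟩
    rw [orbitComponent_mod hf hA hk hAk, orbitComponent_eq hf hA.isPreconnected hm]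
  · rintro ⟨j, -, rfl⟩
    obtain ⟨x, hx⟩ := hA.nonempty.image f^[j]
    exact ⟨x, image_iterate_subset_orbitSet j hx, orbitComponent_eq hf hA.isPreconnected hx⟩

theorem orbitSet_eq_biUnion_orbitComponent :
    orbitSet f A = ⋃ j ∈ Finset.range (orbitComponentPeriod f A), orbitComponent f A j := by
  refine Subset.antisymm (iUnion_subset fun m => ?_)
    (iUnion₂_subset fun j _ => orbitComponent_subset_orbitSet j)
  refine (image_iterate_subset_orbitComponent m).trans ?_
  rw [← orbitComponent_mod hf hA hk hAk m]
  exact subset_iUnion₂ (s := fun j (_ : j ∈ Finset.range _) => orbitComponent f A j) _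
    (Finset.mem_range.2 (Nat.mod_lt _ (orbitComponentPeriod_pos hf hA hk hAk)))

theorem image_orbitComponent {j : ℕ} (hj : j + 1 < orbitComponentPeriod f A) :
    f '' orbitComponent f A j = orbitComponent f A (j + 1) := by
  refine (image_orbitComponent_subset hf j).antisymm ?_
  rw [orbitComponent_eq_iUnion hf hA hk hAk (j + 1)]
  refine iUnion₂_subset fun m hm => ?_
  obtain ⟨m, rfl⟩ : ∃ m', m = m' + 1 := Nat.exists_eq_succ_of_ne_zero fun h0 => by
    rw [h0, Nat.ModEq, Nat.zero_mod, Nat.mod_eq_of_lt hj] at hm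
    omega
  rw [iterate_succ', image_comp]
  exact image_mono <| image_iterate_subset_orbitComponent_of_modEq hf hA hk hAk <|
    Nat.ModEq.add_right_cancel' 1 hm

theorem image_orbitComponent_pred_subset :
    f '' orbitComponent f A (orbitComponentPeriod f A - 1) ⊆ orbitComponent f A 0 := by
  have h := image_orbitComponent_subset hf (A := A) (orbitComponentPeriod f A - 1)
  rwa [Nat.sub_add_cancel (orbitComponentPeriod_pos hf hA hk hAk),
    (orbitComponent_eq_iff_modEq hf hA hk hAk).2 (Nat.modEq_zero_iff_dvd.2 dvd_rfl)] at h

theorem orbitComponent_eq_iUnion_range {j : ℕ} (hj : j < orbitComponentPeriod f A) :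
    orbitComponent f A j = ⋃ ℓ ∈ Finset.range (k / orbitComponentPeriod f A),
      ⋃ m, f^[j + ℓ * orbitComponentPeriod f A + m * k] '' A := by
  have hr := orbitComponentPeriod_pos hf hA hk hAk
  obtain ⟨c, hc⟩ := orbitComponentPeriod_dvd hf hA hAk
  set r := orbitComponentPeriod f A
  have hc0 : 0 < c := Nat.pos_of_mul_pos_left (hc ▸ hk)
  rw [orbitComponent_eq_iUnion hf hA hk hAk, hc, Nat.mul_div_cancel_left c hr]
  refine Subset.antisymm (iUnion₂_subset fun t ht => ?_)
    (iUnion₂_subset fun ℓ _ => iUnion_subset fun m => ?_)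
  · have ht' : t = j + t / r % c * r + t / r / c * (r * c) := by
      have h₁ := Nat.mod_add_div' t r
      have h₂ := Nat.mod_add_div' (t / r) c
      rw [ht, Nat.mod_eq_of_lt hj] at h₁
      nlinarith
    rw [ht']
    exact subset_iUnion₂_of_subset (t / r % c) (Finset.mem_range.2 (Nat.mod_lt _ hc0))
      (subset_iUnion (fun m => f^[j + t / r % c * r + m * (r * c)] '' A) _)
  · refine subset_iUnion₂_of_subset (j + ℓ * r + m * (r * c)) ?_ subset_rfl
    rw [Nat.ModEq, show j + ℓ * r + m * (r * c) = j + (ℓ + m * c) * r by ring,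
      Nat.add_mul_mod_self_right]

end PeriodicOrbit

/-- Structure of orbits of connected sets in a dendrite of finite length, for a connected set
whose iterates do not shrink to diameter zero. -/
theorem orbit_structure_finite_length
    (D : Type*) [MetricSpace D] [MeasurableSpace D] [BorelSpace D] (hD : IsDendrite D)
    (hlen : MeasureTheory.Measure.hausdorffMeasure 1 (Set.univ : Set D) < ⊤)
    (f : D → D) (hf : Continuous f)
    {E : Set D} (hE : IsConnected E)
    (hsup : 0 < Filter.atTop.limsup (fun n : ℕ => Metric.diam ((f^[n]) '' E))) :
    ∃ n₀ : ℕ,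
      ((∃ k : ℕ, 0 < k ∧ (((f^[n₀]) '' E) ∩ ((f^[n₀ + k]) '' E)).Nonempty) ∧
       (∀ m < n₀, ¬ ∃ k : ℕ, 0 < k ∧ (((f^[m]) '' E) ∩ ((f^[m + k]) '' E)).Nonempty)) ∧
      ∀ k : ℕ, 0 < k → (((f^[n₀]) '' E) ∩ ((f^[n₀ + k]) '' E)).Nonempty →
        ((∀ i < k, IsConnected (⋃ j : ℕ, (f^[n₀ + i + j * k]) '' E)) ∧
         (∀ i : ℕ, i + 1 < k →
            f '' (⋃ j : ℕ, (f^[n₀ + i + j * k]) '' E)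
              = ⋃ j : ℕ, (f^[n₀ + (i + 1) + j * k]) '' E) ∧
         (f '' (⋃ j : ℕ, (f^[n₀ + (k - 1) + j * k]) '' E)
            ⊆ ⋃ j : ℕ, (f^[n₀ + j * k]) '' E) ∧
         ∃ r : ℕ, 0 < r ∧ r ∣ k ∧ ∃ L : ℕ → Set D,
           (componentsIn (orbitSet f ((f^[n₀]) '' E)) = {C | ∃ j < r, C = L j}) ∧
           (∀ j < r, ∀ j' < r, j ≠ j' → L j ≠ L j') ∧
           ((⋃ j : ℕ, (f^[n₀ + j * k]) '' E) ⊆ L 0) ∧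
           ((f^[n₀]) '' E ⊆ L 0) ∧
           (∀ j : ℕ, j + 1 < r → f '' L j = L (j + 1)) ∧
           (f '' L (r - 1) ⊆ L 0) ∧
           (∀ j < r, L j = ⋃ ℓ ∈ Finset.range (k / r),
              ⋃ m : ℕ, (f^[n₀ + (j + ℓ * r) + m * k]) '' E) ∧
           (orbitSet f E
              = (⋃ m ∈ Finset.range n₀, (f^[m]) '' E) ∪ ⋃ j ∈ Finset.range r, L j) ∧
           (∀ m < n₀, ∀ m' < n₀, m ≠ m' → Disjoint ((f^[m]) '' E) ((f^[m']) '' E)) ∧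
           (∀ m < n₀, ∀ j < r, Disjoint ((f^[m]) '' E) (L j)) ∧
           (∀ j < r, ∀ j' < r, j ≠ j' → Disjoint (L j) (L j'))) := by
  have := hD.compact
  classical
  have hex := exists_image_iterate_inter_nonempty hlen.ne hf hE.isPreconnected hsup
  refine ⟨Nat.find hex, ⟨Nat.find_spec hex, fun m hm => Nat.find_min hex hm⟩, fun k hk hkE => ?_⟩
  set n₀ := Nat.find hex
  have hpre : ∀ m < n₀, ∀ m', m < m' → Disjoint (f^[m] '' E) (f^[m'] '' E) :=
    fun m hm _ => disjoint_image_iterate_of_not_exists (Nat.find_min hex hm)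
  set A := f^[n₀] '' E
  have hA : IsConnected A := hE.image _ (hf.iterate n₀).continuousOn
  have hAk : (A ∩ f^[k] '' A).Nonempty := by rwa [← image_iterate_add, add_comm]
  have hshift : ∀ t, f^[n₀ + t] '' E = f^[t] '' A := fun t => by rw [add_comm, image_iterate_add]
  have hshift' : ∀ i t, f^[n₀ + i + t] '' E = f^[i + t] '' A := fun i t => by
    rw [add_assoc, hshift]
  simp only [hshift', hshift]
  have hrk := orbitComponentPeriod_dvd hf hA hAk
  refine ⟨fun i _ => isConnected_iUnion_image_iterate hf hA hAk i,
    fun i _ => image_iUnion_image_iterate k i, image_iUnion_image_iterate_pred_subset hk,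
    orbitComponentPeriod f A, orbitComponentPeriod_pos hf hA hk hAk, hrk, orbitComponent f A,
    componentsIn_orbitSet hf hA hk hAk,
    fun j hj j' hj' hne h => hne (orbitComponent_inj_of_lt hf hA hk hAk hj hj' h),
    iUnion_subset fun j => image_iterate_subset_orbitComponent_of_modEq hf hA hk hAk
      (Nat.modEq_zero_iff_dvd.2 (dvd_mul_of_dvd_right hrk j)),
    by simpa using image_iterate_subset_orbitComponent (f := f) (A := A) 0,
    fun j hj => image_orbitComponent hf hA hk hAk hj, image_orbitComponent_pred_subset hf hA hk hAk,
    fun j hj => orbitComponent_eq_iUnion_range hf hA hk hAk hj,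
    by rw [orbitSet_eq_union f E n₀, ← orbitSet_eq_biUnion_orbitComponent hf hA hk hAk],
    fun m hm m' hm' hne => (lt_or_gt_of_ne hne).elim (hpre m hm m') fun h => (hpre m' hm' m h).symm,
    fun m hm j _ => (disjoint_orbitSet_of_not_exists (Nat.find_min hex hm) hm).mono_right
      (orbitComponent_subset_orbitSet j),
    fun j hj j' hj' => disjoint_orbitComponent hf hA hk hAk hj hj'⟩
end
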